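/- Let (X,d) be a compact metric space, f_{1,∞} an NDS on X, Z a nonempty compact subset of X, ψ ∈ C(X,ℝ), α ∈ ℝ, N ∈ ℕ, and ε > 0. Suppose c := W(N,α,ε,Z,ψ) > 0. Then there exists a Borel probability measure μ on X such that μ(Z) = 1 and μ(B_n(x,ε)) ≤ (1/c) exp(−α n + S_{1,n}ψ(x,ε)) for all x ∈ X and all n ≥ N. -/

import Mathlib

open Filter MeasureTheory Set ENNReal

noncomputable section

variable {X : Type} [MetricSpace X]

/-- The iterate `f_1^n = f_n ∘ ⋯ ∘ f_1` of the NDS `f`, where `f 0` is the first map `f_1`. -/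
def nIter (f : ℕ → X → X) : ℕ → X → X
  | 0 => id
  | n + 1 => f n ∘ nIter f n

/-- The Bowen (dynamical) ball `B_n(x, ε)` for the Bowen metric
`d_n(x,y) = max_{0 ≤ j < n} d(f_1^j x, f_1^j y)`. -/
def bowenBall (f : ℕ → X → X) (n : ℕ) (x : X) (ε : ℝ) : Set X :=
  {y | ∀ j < n, dist (nIter f j x) (nIter f j y) < ε}

/-- The Birkhoff sum `S_{1,n} ψ (x) = ∑_{j=0}^{n-1} ψ(f_1^j x)`. -/
def birkSum (f : ℕ → X → X) (ψ : X → ℝ) (n : ℕ) (x : X) : ℝ :=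
  ∑ j ∈ Finset.range n, ψ (nIter f j x)

/-- `S_{1,n} ψ (x, ε) = sup_{y ∈ B_n(x,ε)} S_{1,n} ψ (y)`. -/
def birkSupBall (f : ℕ → X → X) (ψ : X → ℝ) (n : ℕ) (x : X) (ε : ℝ) : ℝ :=
  sSup (birkSum f ψ n '' bowenBall f n x ε)

/-- `M(n, α, ε, Z, ψ)`: infimum of `∑_i exp(-α n_i + S_{1,n_i}ψ(x_i, ε))` over all finite or
countable covers `Z ⊆ ⋃_i B_{n_i}(x_i, ε)` with `n_i ≥ n`. -/
def Mpre (f : ℕ → X → X) (ψ : X → ℝ) (Z : Set X) (n : ℕ) (α ε : ℝ) : ℝ≥0∞ :=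
  sInf { S : ℝ≥0∞ | ∃ (u : Set ℕ) (c : ℕ → X) (m : ℕ → ℕ),
    (∀ i ∈ u, n ≤ m i) ∧ (Z ⊆ ⋃ i ∈ u, bowenBall f (m i) (c i) ε) ∧
    S = ∑' i : u, ENNReal.ofReal (Real.exp (-α * (m i : ℝ) + birkSupBall f ψ (m i) (c i) ε)) }

/-- `𝓜(n, α, ε, Z, ψ)`: as `Mpre` but with the Birkhoff sums evaluated at the centers. -/
def MpreC (f : ℕ → X → X) (ψ : X → ℝ) (Z : Set X) (n : ℕ) (α ε : ℝ) : ℝ≥0∞ :=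
  sInf { S : ℝ≥0∞ | ∃ (u : Set ℕ) (c : ℕ → X) (m : ℕ → ℕ),
    (∀ i ∈ u, n ≤ m i) ∧ (Z ⊆ ⋃ i ∈ u, bowenBall f (m i) (c i) ε) ∧
    S = ∑' i : u, ENNReal.ofReal (Real.exp (-α * (m i : ℝ) + birkSum f ψ (m i) (c i))) }

/-- `M(α, ε, Z, ψ) = lim_{n→∞} M(n, α, ε, Z, ψ)`; the quantity is nondecreasing in `n`,
so the limit is the supremum. -/
def Mlim (f : ℕ → X → X) (ψ : X → ℝ) (Z : Set X) (α ε : ℝ) : ℝ≥0∞ :=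
  ⨆ n : ℕ, Mpre f ψ Z n α ε

/-- `𝓜(α, ε, Z, ψ) = lim_{n→∞} 𝓜(n, α, ε, Z, ψ)`. -/
def MlimC (f : ℕ → X → X) (ψ : X → ℝ) (Z : Set X) (α ε : ℝ) : ℝ≥0∞ :=
  ⨆ n : ℕ, MpreC f ψ Z n α ε

/-- `P^B(ε, Z, ψ) = inf {α : M(α, ε, Z, ψ) = 0}`, as an extended real. -/
def PBeps (f : ℕ → X → X) (ψ : X → ℝ) (Z : Set X) (ε : ℝ) : EReal :=
  sInf (Real.toEReal '' {α : ℝ | Mlim f ψ Z α ε = 0})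

/-- `𝒫^B(ε, Z, ψ) = inf {α : 𝓜(α, ε, Z, ψ) = 0}`. -/
def PBCeps (f : ℕ → X → X) (ψ : X → ℝ) (Z : Set X) (ε : ℝ) : EReal :=
  sInf (Real.toEReal '' {α : ℝ | MlimC f ψ Z α ε = 0})

/-- The Pesin–Pitskel topological pressure `P^B_{f_{1,∞}}(Z, ψ) = lim_{ε→0} P^B(ε, Z, ψ)`. -/
def PB (f : ℕ → X → X) (ψ : X → ℝ) (Z : Set X) : EReal :=
  limUnder (nhdsWithin 0 (Ioi 0)) fun ε : ℝ => PBeps f ψ Z ε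

/-- `W(n, α, ε, Z, ψ)`: the weighted analogue of `Mpre`. -/
def Wpre (f : ℕ → X → X) (ψ : X → ℝ) (Z : Set X) (n : ℕ) (α ε : ℝ) : ℝ≥0∞ :=
  sInf { S : ℝ≥0∞ | ∃ (u : Set ℕ) (cx : ℕ → X) (m : ℕ → ℕ) (c : ℕ → ℝ),
    (∀ i ∈ u, 0 < c i) ∧ (∀ i ∈ u, n ≤ m i) ∧
    (∀ z ∈ Z, 1 ≤ ∑' i : u,
      (bowenBall f (m i) (cx i) ε).indicator (fun _ => ENNReal.ofReal (c i)) z) ∧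
    S = ∑' i : u, ENNReal.ofReal (c i) *
      ENNReal.ofReal (Real.exp (-α * (m i : ℝ) + birkSupBall f ψ (m i) (cx i) ε)) }

/-- `W(α, ε, Z, ψ) = lim_{n→∞} W(n, α, ε, Z, ψ)`. -/
def Wlim (f : ℕ → X → X) (ψ : X → ℝ) (Z : Set X) (α ε : ℝ) : ℝ≥0∞ :=
  ⨆ n : ℕ, Wpre f ψ Z n α ε

/-- `P^W(ε, Z, ψ)`: the critical value of `α` at which `W(α, ε, Z, ψ)` jumps from `∞` to `0`. -/
def PWeps (f : ℕ → X → X) (ψ : X → ℝ) (Z : Set X) (ε : ℝ) : EReal :=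
  sInf (Real.toEReal '' {α : ℝ | Wlim f ψ Z α ε = 0})

/-- The weighted topological pressure `P^W_{f_{1,∞}}(Z, ψ) = lim_{ε→0} P^W(ε, Z, ψ)`. -/
def PW (f : ℕ → X → X) (ψ : X → ℝ) (Z : Set X) : EReal :=
  limUnder (nhdsWithin 0 (Ioi 0)) fun ε : ℝ => PWeps f ψ Z ε

/-- Bowen topological entropy `h^B_top(f_{1,∞}, Z)`, i.e. pressure of the zero potential. -/
def hBtop (f : ℕ → X → X) (Z : Set X) : EReal := PB f (fun _ => 0) Z

/-- Weighted Bowen topological entropy `h^{WB}_top(f_{1,∞}, Z)`. -/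
def hWBtop (f : ℕ → X → X) (Z : Set X) : EReal := PW f (fun _ => 0) Z

/-- `EReal → ℝ≥0∞`, sending `⊤` to `⊤` and everything negative to `0`. -/
def ERealToENNReal (x : EReal) : ℝ≥0∞ := if x = ⊤ then ⊤ else ENNReal.ofReal x.toReal

variable [MeasurableSpace X]

/-- The measure-theoretic local pressure
`P_μ(x,ψ) = lim_{ε→0} liminf_{n→∞} (-log μ(B_n(x,ε)) + S_{1,n}ψ(x))/n`. -/
def Ploc (f : ℕ → X → X) (μ : Measure X) (ψ : X → ℝ) (x : X) : EReal :=
  limUnder (nhdsWithin 0 (Ioi 0)) fun ε : ℝ =>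
    Filter.atTop.liminf fun n : ℕ =>
      (((n : ℝ)⁻¹ : ℝ) : EReal) *
        (-(ENNReal.log (μ (bowenBall f n x ε))) + ((birkSum f ψ n x : ℝ) : EReal))

/-- The integral of an extended-real-valued function: the difference of the lower integrals of
its positive and negative parts. -/
def ERealIntegral (μ : Measure X) (g : X → EReal) : EReal :=
  ((∫⁻ x, ERealToENNReal (g x) ∂μ : ℝ≥0∞) : EReal)
    - ((∫⁻ x, ERealToENNReal (-(g x)) ∂μ : ℝ≥0∞) : EReal)

/-- The measure-theoretic pressure `P_μ(X, ψ) = ∫ P_μ(x, ψ) dμ(x)`. -/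
def Pmeas (f : ℕ → X → X) (μ : Measure X) (ψ : X → ℝ) : EReal :=
  ERealIntegral μ (Ploc f μ ψ)

/-- The measure-theoretic local lower entropy `h̲_μ(f_{1,∞}, x)`. -/
def hloc (f : ℕ → X → X) (μ : Measure X) (x : X) : EReal := Ploc f μ (fun _ => 0) x

/-- The measure-theoretic lower entropy `h̲_μ(f_{1,∞}) = ∫ h̲_μ(f_{1,∞}, x) dμ(x)`. -/
def hmeas (f : ℕ → X → X) (μ : Measure X) : EReal := Pmeas f μ (fun _ => 0)


end

/-!
Extend `W(N, α, ε, Z, ψ)` from `χ_Z` to a functional `W(g)` on real functions, by asking the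
weighted Bowen balls to dominate `g` on `Z`. It is positively homogeneous and subadditive, it
vanishes when `g ≤ 0` on `Z`, and `W(1) = c`. By Hahn–Banach some linear `L ≤ W / c` on `C(X, ℝ)`
has `L 1 = 1`; it is positive, since `L (-g) ≤ W(-g) / c = 0` for `g ≥ 0`. Its Riesz measure `μ`
is a probability measure carried by `Z`, and by inner regularity `μ(B_n(x, ε))` is bounded by the
values `L g` for `0 ≤ g ≤ χ_{B_n(x, ε)}`, hence by `c⁻¹ exp(−αn + S_{1,n}ψ(x, ε))`, the cost of
the cover by the single ball `B_n(x, ε)`.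
-/

open scoped CompactlySupported

theorem exists_linearMap_eq_one_le_of_sublinear {E : Type*} [AddCommGroup E] [Module ℝ E]
    (p : E → ℝ) (hp_smul : ∀ t : ℝ, 0 < t → ∀ x, p (t • x) = t * p x)
    (hp_add : ∀ x y, p (x + y) ≤ p x + p y) {e : E} (he : p e = 1) :
    ∃ L : E →ₗ[ℝ] ℝ, L e = 1 ∧ ∀ x, L x ≤ p x := by
  have hp_zero : p 0 = 0 := by
    have := hp_smul 2 two_pos 0
    rw [smul_zero] at this
    linarith
  have he_ne : ∀ r : ℝ, r • e = 0 → r • (1 : ℝ) = 0 := by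
    intro r hr
    rcases smul_eq_zero.1 hr with rfl | rfl
    · exact zero_smul ℝ 1
    · exact absurd (hp_zero ▸ he) zero_ne_one
  have h_le : ∀ t : ℝ, t ≤ p (t • e) := by
    intro t
    rcases lt_trichotomy t 0 with ht | rfl | ht
    · have := hp_add (t • e) ((-t) • e)
      rw [← add_smul, add_neg_cancel, zero_smul, hp_zero, hp_smul _ (neg_pos.2 ht), he] at this
      linarith
    · rw [zero_smul, hp_zero]
    · rw [hp_smul t ht, he, mul_one]
  obtain ⟨L, hL_eq, hL_le⟩ := exists_extension_of_le_sublinear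
    (LinearPMap.mkSpanSingleton' e (1 : ℝ) he_ne) p hp_smul hp_add (by
      rintro ⟨x, hx⟩
      obtain ⟨t, rfl⟩ := Submodule.mem_span_singleton.1 hx
      rw [LinearPMap.mkSpanSingleton'_apply, smul_eq_mul, mul_one]
      exact h_le t)
  exact ⟨L, (hL_eq ⟨e, Submodule.mem_span_singleton_self e⟩).trans
    (LinearPMap.mkSpanSingleton'_apply_self _ _ _ _), hL_le⟩

section RieszMeasure

variable {Y : Type*} [TopologicalSpace Y] [T2Space Y] [MeasurableSpace Y] [BorelSpace Y]

theorem RealRMK.rieszMeasure_le_of_isOpen [LocallyCompactSpace Y] (Λ : C_c(Y, ℝ) →ₚ[ℝ] ℝ)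
    {U : Set Y} (hU : IsOpen U) {c : ℝ≥0∞}
    (h : ∀ g : C_c(Y, ℝ), 0 ≤ g → ⇑g ≤ U.indicator 1 → ENNReal.ofReal (Λ g) ≤ c) :
    rieszMeasure Λ U ≤ c := by
  rw [hU.measure_eq_iSup_isCompact]
  refine iSup₂_le fun K hKU => iSup_le fun hK => ?_
  obtain ⟨g, hgK, hgU, hg_supp, hg01⟩ := exists_continuous_one_zero_of_isCompact hK
    hU.isClosed_compl (disjoint_compl_right_iff_subset.2 hKU)
  calc rieszMeasure Λ K ≤ ENNReal.ofReal (Λ ⟨g, hg_supp⟩) :=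
        rieszMeasure_le_of_eq_one Λ (fun y => (hg01 y).1) hK hgK
    _ ≤ c := by
        refine h _ (fun y => (hg01 y).1) fun y => ?_
        by_cases hy : y ∈ U
        · simpa [hy] using (hg01 y).2
        · simp [hy, hgU hy]

theorem exists_isProbabilityMeasure_of_sublinear [CompactSpace Y] {Z : Set Y} (hZ : IsClosed Z)
    (q : C(Y, ℝ) → ℝ≥0∞) (hq_top : ∀ g, q g ≠ ⊤)
    (hq_smul : ∀ t : ℝ, 0 < t → ∀ g, q (t • g) = ENNReal.ofReal t * q g)
    (hq_add : ∀ g h, q (g + h) ≤ q g + q h) (hq_one : q 1 = 1)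
    (hq_zero : ∀ g : C(Y, ℝ), (∀ y ∈ Z, g y ≤ 0) → q g = 0) :
    ∃ μ : Measure Y, IsProbabilityMeasure μ ∧ μ Z = 1 ∧
      ∀ U : Set Y, IsOpen U → ∀ c : ℝ≥0∞,
        (∀ g : C(Y, ℝ), 0 ≤ g → ⇑g ≤ U.indicator 1 → q g ≤ c) → μ U ≤ c := by
  obtain ⟨L, hL_one, hL_le⟩ := exists_linearMap_eq_one_le_of_sublinear (fun g => (q g).toReal)
    (fun t ht g => by rw [hq_smul t ht, ENNReal.toReal_mul, ENNReal.toReal_ofReal ht.le])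
    (fun g h => by
      rw [← ENNReal.toReal_add (hq_top g) (hq_top h)]
      exact ENNReal.toReal_mono (ENNReal.add_ne_top.2 ⟨hq_top g, hq_top h⟩) (hq_add g h))
    (e := 1) (by rw [hq_one, ENNReal.toReal_one])
  have hL_nonneg : ∀ g : C(Y, ℝ), 0 ≤ g → 0 ≤ L g := by
    intro g hg
    have := hL_le (-g)
    rw [hq_zero (-g) fun y _ => neg_nonpos.2 (hg y), ENNReal.toReal_zero, map_neg] at this
    linarith
  let Λ : C_c(Y, ℝ) →ₚ[ℝ] ℝ := PositiveLinearMap.mk₀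
    { toFun := fun g => L g.toContinuousMap
      map_add' := fun g h => map_add L _ _
      map_smul' := fun t g => map_smul L t _ }
    fun g hg => hL_nonneg _ hg
  have hΛ_le : ∀ g, ENNReal.ofReal (Λ g) ≤ q g.toContinuousMap := fun g =>
    (ENNReal.ofReal_le_ofReal (hL_le _)).trans ENNReal.ofReal_toReal_le
  let one : C_c(Y, ℝ) := CompactlySupportedContinuousMap.continuousMapEquiv 1
  have hΛ_one : Λ one = 1 := hL_one
  have hμ_univ : RealRMK.rieszMeasure Λ univ = 1 := by
    refine le_antisymm ?_ ?_
    · simpa [hΛ_one] using RealRMK.rieszMeasure_le_of_eq_one Λ (f := one)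
        (fun _ => zero_le_one) isCompact_univ fun _ _ => rfl
    · simpa [hΛ_one] using RealRMK.le_rieszMeasure_tsupport_subset Λ (f := one)
        (fun _ => ⟨zero_le_one, le_rfl⟩) (subset_univ _)
  have hμ_compl : RealRMK.rieszMeasure Λ Zᶜ = 0 := by
    refine nonpos_iff_eq_zero.1 (RealRMK.rieszMeasure_le_of_isOpen Λ hZ.isOpen_compl
      fun g _ hg => (hΛ_le g).trans_eq (hq_zero _ fun y hy => ?_))
    simpa [hy] using hg y
  have : IsProbabilityMeasure (RealRMK.rieszMeasure Λ) := ⟨hμ_univ⟩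
  refine ⟨RealRMK.rieszMeasure Λ, this, (prob_compl_eq_zero_iff hZ.measurableSet).1 hμ_compl,
    fun U hU c hc => RealRMK.rieszMeasure_le_of_isOpen Λ hU fun g hg0 hg =>
      (hΛ_le g).trans (hc _ hg0 hg)⟩

end RieszMeasure

section BowenBall

variable {X : Type} [MetricSpace X] (f : ℕ → X → X)

theorem continuous_nIter (hf : ∀ n, Continuous (f n)) : ∀ n, Continuous (nIter f n)
  | 0 => continuous_id
  | n + 1 => (hf n).comp (continuous_nIter hf n)

theorem isOpen_bowenBall (hf : ∀ n, Continuous (f n)) (n : ℕ) (x : X) (ε : ℝ) :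
    IsOpen (bowenBall f n x ε) := by
  have : bowenBall f n x ε =
      ⋂ j ∈ Finset.range n, {y | dist (nIter f j x) (nIter f j y) < ε} := by
    ext y
    simp [bowenBall]
  rw [this]
  exact isOpen_biInter_finset fun j _ =>
    isOpen_lt (continuous_const.dist (continuous_nIter f hf j)) continuous_const

theorem mem_bowenBall_self {ε : ℝ} (hε : 0 < ε) (n : ℕ) (x : X) : x ∈ bowenBall f n x ε :=
  fun _ _ => by simpa using hε

end BowenBall

def interleave {β : Type*} (a b : ℕ → β) (k : ℕ) : β :=
  if k % 2 = 0 then a (k / 2) else b (k / 2)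

@[simp]
theorem interleave_two_mul {β : Type*} (a b : ℕ → β) (i : ℕ) : interleave a b (2 * i) = a i := by
  simp [interleave]

@[simp]
theorem interleave_two_mul_add_one {β : Type*} (a b : ℕ → β) (i : ℕ) :
    interleave a b (2 * i + 1) = b i := by
  simp [interleave, Nat.add_mod, Nat.add_div]

theorem tsum_union_image_two_mul (u v : Set ℕ) (F : ℕ → ℝ≥0∞) :
    ∑' k : ↥((2 * ·) '' u ∪ (2 * · + 1) '' v), F k
      = ∑' i : u, F (2 * i) + ∑' j : v, F (2 * j + 1) := by
  have hd : Disjoint ((2 * ·) '' u) ((2 * · + 1) '' v) := by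
    rw [Set.disjoint_left]
    rintro k ⟨i, _, rfl⟩ ⟨j, _, hj⟩
    simp only at hj
    omega
  rw [ENNReal.summable.tsum_union_disjoint hd ENNReal.summable,
    tsum_image F fun a _ b _ h => by simpa using h, tsum_image F fun a _ b _ h => by simpa using h]

section WeightedCover

variable {X : Type} [MetricSpace X] (f : ℕ → X → X) (ψ : X → ℝ) (Z : Set X) (N : ℕ) (α ε : ℝ)

def WpreFunSet (g : X → ℝ) : Set ℝ≥0∞ :=
  { S : ℝ≥0∞ | ∃ (u : Set ℕ) (cx : ℕ → X) (m : ℕ → ℕ) (c : ℕ → ℝ),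
    (∀ i ∈ u, 0 < c i) ∧ (∀ i ∈ u, N ≤ m i) ∧
    (∀ z ∈ Z, ENNReal.ofReal (g z) ≤ ∑' i : u,
      (bowenBall f (m i) (cx i) ε).indicator (fun _ => ENNReal.ofReal (c i)) z) ∧
    S = ∑' i : u, ENNReal.ofReal (c i) *
      ENNReal.ofReal (Real.exp (-α * (m i : ℝ) + birkSupBall f ψ (m i) (cx i) ε)) }

noncomputable def WpreFun (g : X → ℝ) : ℝ≥0∞ := sInf (WpreFunSet f ψ Z N α ε g)

theorem WpreFun_one : WpreFun f ψ Z N α ε 1 = Wpre f ψ Z N α ε := by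
  simp only [WpreFun, WpreFunSet, Wpre, Pi.one_apply, ENNReal.ofReal_one]

theorem Wpre_le_Mpre : Wpre f ψ Z N α ε ≤ Mpre f ψ Z N α ε := by
  refine sInf_le_sInf ?_
  rintro S ⟨u, cx, m, hm, hcover, rfl⟩
  refine ⟨u, cx, m, fun _ => 1, fun _ _ => one_pos, hm, fun z hz => ?_, by simp⟩
  obtain ⟨i, hi, hzi⟩ := mem_iUnion₂.1 (hcover hz)
  calc (1 : ℝ≥0∞) = (bowenBall f (m i) (cx i) ε).indicator (fun _ => ENNReal.ofReal 1) z := by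
        simp [hzi]
    _ ≤ _ := ENNReal.le_tsum (⟨i, hi⟩ : u)

theorem Mpre_ne_top [CompactSpace X] [Nonempty X] (hf : ∀ n, Continuous (f n)) (hε : 0 < ε) :
    Mpre f ψ Z N α ε ≠ ⊤ := by
  obtain ⟨t, ht⟩ := isCompact_univ.elim_finite_subcover (fun x => bowenBall f N x ε)
    (fun x => isOpen_bowenBall f hf N x ε)
    fun x _ => mem_iUnion.2 ⟨x, mem_bowenBall_self f hε N x⟩
  refine ne_top_of_le_ne_top ?_ (sInf_le ⟨(Finset.range t.toList.length : Set ℕ),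
    fun i => t.toList.getD i (Classical.arbitrary X), fun _ => N, fun _ _ => le_rfl,
    fun z _ => ?_, rfl⟩)
  · rw [tsum_fintype]
    exact ENNReal.sum_ne_top.2 fun _ _ => ENNReal.ofReal_ne_top
  · obtain ⟨x, hxt, hzx⟩ := mem_iUnion₂.1 (ht (mem_univ z))
    obtain ⟨j, hj, rfl⟩ := List.getElem_of_mem (Finset.mem_toList.2 hxt)
    refine mem_iUnion₂.2 ⟨j, Finset.mem_coe.2 (Finset.mem_range.2 hj), ?_⟩
    simpa only [List.getD_eq_getElem _ _ hj] using hzx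

theorem WpreFun_mono {g h : X → ℝ} (hgh : ∀ z ∈ Z, g z ≤ h z) :
    WpreFun f ψ Z N α ε g ≤ WpreFun f ψ Z N α ε h := by
  refine sInf_le_sInf ?_
  rintro S ⟨u, cx, m, c, hc, hm, hcover, rfl⟩
  exact ⟨u, cx, m, c, hc, hm, fun z hz =>
    (ENNReal.ofReal_le_ofReal (hgh z hz)).trans (hcover z hz), rfl⟩

theorem WpreFun_eq_zero_of_nonpos [Nonempty X] {g : X → ℝ} (hg : ∀ z ∈ Z, g z ≤ 0) :
    WpreFun f ψ Z N α ε g = 0 := by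
  refine nonpos_iff_eq_zero.1 (sInf_le ⟨∅, fun _ => Classical.arbitrary X, fun _ => N, fun _ => 1,
    by simp, by simp, fun z hz => ?_, by simp⟩)
  simp [ENNReal.ofReal_of_nonpos (hg z hz)]

theorem WpreFun_le_of_le_indicator {g : X → ℝ} {n : ℕ} (hn : N ≤ n) (x : X)
    (hg : ∀ z ∈ Z, g z ≤ (bowenBall f n x ε).indicator 1 z) :
    WpreFun f ψ Z N α ε g ≤
      ENNReal.ofReal (Real.exp (-α * (n : ℝ) + birkSupBall f ψ n x ε)) := by
  refine sInf_le_of_le ⟨{0}, fun _ => x, fun _ => n, fun _ => 1, by simp, by simpa using hn,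
    fun z hz => ?_, rfl⟩ (by simp)
  rw [tsum_singleton 0 fun _ => (bowenBall f n x ε).indicator (fun _ => ENNReal.ofReal 1) z]
  by_cases hz' : z ∈ bowenBall f n x ε
  · simpa [hz'] using hg z hz
  · simpa [hz', ENNReal.ofReal_eq_zero] using hg z hz

theorem smul_mem_WpreFunSet {g : X → ℝ} {t : ℝ} (ht : 0 < t) {S : ℝ≥0∞}
    (hS : S ∈ WpreFunSet f ψ Z N α ε g) :
    ENNReal.ofReal t * S ∈ WpreFunSet f ψ Z N α ε (t • g) := by
  obtain ⟨u, cx, m, c, hc, hm, hcover, rfl⟩ := hS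
  refine ⟨u, cx, m, fun i => t * c i, fun i hi => mul_pos ht (hc i hi), hm, fun z hz => ?_, ?_⟩
  · simp only [Pi.smul_apply, smul_eq_mul, ENNReal.ofReal_mul ht.le,
      Set.indicator_mul_right _ (fun _ => ENNReal.ofReal t), ENNReal.tsum_mul_left]
    exact mul_le_mul_right (hcover z hz) _
  · simp only [← ENNReal.tsum_mul_left, ENNReal.ofReal_mul ht.le, mul_assoc]

theorem WpreFun_smul_le (g : X → ℝ) {t : ℝ} (ht : 0 < t) :
    WpreFun f ψ Z N α ε (t • g) ≤ ENNReal.ofReal t * WpreFun f ψ Z N α ε g := by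
  rw [WpreFun, WpreFun, sInf_eq_iInf' (WpreFunSet f ψ Z N α ε g),
    ENNReal.mul_iInf_of_ne (by simpa using ht) ENNReal.ofReal_ne_top]
  exact le_iInf fun S => sInf_le (smul_mem_WpreFunSet f ψ Z N α ε ht S.2)

theorem WpreFun_smul (g : X → ℝ) {t : ℝ} (ht : 0 < t) :
    WpreFun f ψ Z N α ε (t • g) = ENNReal.ofReal t * WpreFun f ψ Z N α ε g := by
  refine le_antisymm (WpreFun_smul_le f ψ Z N α ε g ht) ?_
  calc ENNReal.ofReal t * WpreFun f ψ Z N α ε g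
      = ENNReal.ofReal t * WpreFun f ψ Z N α ε (t⁻¹ • t • g) := by
        rw [smul_smul, inv_mul_cancel₀ ht.ne', one_smul]
    _ ≤ ENNReal.ofReal t * (ENNReal.ofReal t⁻¹ * WpreFun f ψ Z N α ε (t • g)) :=
        mul_le_mul_right (WpreFun_smul_le f ψ Z N α ε _ (inv_pos.2 ht)) _
    _ = WpreFun f ψ Z N α ε (t • g) := by
        rw [← mul_assoc, ← ENNReal.ofReal_mul ht.le, mul_inv_cancel₀ ht.ne', ENNReal.ofReal_one,
          one_mul]

theorem add_mem_WpreFunSet {g h : X → ℝ} {a b : ℝ≥0∞} (ha : a ∈ WpreFunSet f ψ Z N α ε g)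
    (hb : b ∈ WpreFunSet f ψ Z N α ε h) : a + b ∈ WpreFunSet f ψ Z N α ε (g + h) := by
  obtain ⟨u, cx, m, c, hc, hm, hcover, rfl⟩ := ha
  obtain ⟨v, dx, m', d, hd, hm', hcover', rfl⟩ := hb
  refine ⟨(2 * ·) '' u ∪ (2 * · + 1) '' v, interleave cx dx, interleave m m', interleave c d,
    ?_, ?_, fun z hz => ?_, ?_⟩
  · rintro k (⟨i, hi, rfl⟩ | ⟨j, hj, rfl⟩) <;> simp [*]
  · rintro k (⟨i, hi, rfl⟩ | ⟨j, hj, rfl⟩) <;> simp [*]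
  · rw [tsum_union_image_two_mul u v fun k => (bowenBall f (interleave m m' k)
      (interleave cx dx k) ε).indicator (fun _ => ENNReal.ofReal (interleave c d k)) z]
    simp only [interleave_two_mul, interleave_two_mul_add_one, Pi.add_apply]
    exact ENNReal.ofReal_add_le.trans (add_le_add (hcover z hz) (hcover' z hz))
  · rw [tsum_union_image_two_mul u v fun k => ENNReal.ofReal (interleave c d k) *
      ENNReal.ofReal (Real.exp (-α * ((interleave m m' k : ℕ) : ℝ) +
        birkSupBall f ψ (interleave m m' k) (interleave cx dx k) ε))]
    simp only [interleave_two_mul, interleave_two_mul_add_one]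

theorem WpreFun_add_le (g h : X → ℝ) :
    WpreFun f ψ Z N α ε (g + h) ≤ WpreFun f ψ Z N α ε g + WpreFun f ψ Z N α ε h := by
  unfold WpreFun
  rw [ENNReal.sInf_add]
  refine le_iInf₂ fun a ha => ?_
  rw [ENNReal.add_sInf]
  exact le_iInf₂ fun b hb => sInf_le (add_mem_WpreFunSet f ψ Z N α ε ha hb)

theorem WpreFun_ne_top [CompactSpace X] [Nonempty X] (hf : ∀ n, Continuous (f n)) (hε : 0 < ε)
    {g : X → ℝ} (hg : BddAbove (range g)) : WpreFun f ψ Z N α ε g ≠ ⊤ := by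
  obtain ⟨R, hR⟩ := hg
  have hR1 : 0 < max R 1 := lt_max_of_lt_right one_pos
  refine ne_top_of_le_ne_top ?_ (WpreFun_mono f ψ Z N α ε (g := g) (h := max R 1 • 1)
    fun z _ => by simpa using le_max_of_le_left (hR (mem_range_self z)))
  rw [WpreFun_smul _ _ _ _ _ _ _ hR1, WpreFun_one]
  exact ENNReal.mul_ne_top ENNReal.ofReal_ne_top
    (ne_top_of_le_ne_top (Mpre_ne_top f ψ Z N α ε hf hε) (Wpre_le_Mpre f ψ Z N α ε))

end WeightedCover

variable {X : Type} [MetricSpace X] [MeasurableSpace X]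

theorem statement17_general [CompactSpace X] [BorelSpace X]
    (f : ℕ → X → X) (hf : ∀ n, Continuous (f n)) (ψ : X → ℝ)
    (Z : Set X) (hZne : Z.Nonempty) (hZ : IsCompact Z)
    (α : ℝ) (N : ℕ) (ε : ℝ) (hε : 0 < ε) (hc : 0 < Wpre f ψ Z N α ε) :
    ∃ μ : Measure X, IsProbabilityMeasure μ ∧ μ Z = 1 ∧
      ∀ (x : X) (n : ℕ), N ≤ n →
        μ (bowenBall f n x ε) ≤ (Wpre f ψ Z N α ε)⁻¹ *
          ENNReal.ofReal (Real.exp (-α * (n : ℝ) + birkSupBall f ψ n x ε)) := by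
  have : Nonempty X := hZne.to_subtype.map Subtype.val
  have hW_top : Wpre f ψ Z N α ε ≠ ⊤ :=
    ne_top_of_le_ne_top (Mpre_ne_top f ψ Z N α ε hf hε) (Wpre_le_Mpre ..)
  obtain ⟨μ, hμ, hμZ, hμU⟩ := exists_isProbabilityMeasure_of_sublinear hZ.isClosed
    (fun g : C(X, ℝ) => (Wpre f ψ Z N α ε)⁻¹ * WpreFun f ψ Z N α ε g)
    (fun g => ENNReal.mul_ne_top (ENNReal.inv_ne_top.2 hc.ne')
      (WpreFun_ne_top f ψ Z N α ε hf hε (isCompact_range g.continuous).bddAbove))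
    (fun t ht g => by
      simp only [ContinuousMap.coe_smul, WpreFun_smul _ _ _ _ _ _ _ ht, mul_left_comm])
    (fun g h => by simpa only [ContinuousMap.coe_add, mul_add] using
      mul_le_mul_right (WpreFun_add_le f ψ Z N α ε g h) _)
    (by rw [ContinuousMap.coe_one, WpreFun_one, ENNReal.inv_mul_cancel hc.ne' hW_top])
    (fun g hg => by simp only [WpreFun_eq_zero_of_nonpos f ψ Z N α ε hg, mul_zero])
  exact ⟨μ, hμ, hμZ, fun x n hn => hμU _ (isOpen_bowenBall f hf n x ε) _ fun g _ hg =>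
    mul_le_mul_right (WpreFun_le_of_le_indicator f ψ Z N α ε hn x fun z _ => hg z) _⟩

/-- Dynamical Frostman lemma: if `c := W(N,α,ε,Z,ψ) > 0` for a nonempty
compact `Z`, then there is a Borel probability measure `μ` with `μ(Z) = 1` and
`μ(B_n(x,ε)) ≤ c⁻¹ exp(−αn + S_{1,n}ψ(x,ε))` for all `x ∈ X` and `n ≥ N`. -/
theorem statement17 [CompactSpace X] [BorelSpace X]
    (f : ℕ → X → X) (hf : ∀ n, Continuous (f n)) (ψ : X → ℝ) (hψ : Continuous ψ)
    (Z : Set X) (hZne : Z.Nonempty) (hZ : IsCompact Z)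
    (α : ℝ) (N : ℕ) (ε : ℝ) (hε : 0 < ε) (hc : 0 < Wpre f ψ Z N α ε) :
    ∃ μ : Measure X, IsProbabilityMeasure μ ∧ μ Z = 1 ∧
      ∀ (x : X) (n : ℕ), N ≤ n →
        μ (bowenBall f n x ε) ≤ (Wpre f ψ Z N α ε)⁻¹ *
          ENNReal.ofReal (Real.exp (-α * (n : ℝ) + birkSupBall f ψ n x ε)) :=
  statement17_general f hf ψ Z hZne hZ α N ε hε hc
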